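/- arXiv:1908.03110 — 2 statements merged into one kernel-verified Lean document; each statement's English description precedes it below -/
import Mathlib

section
/- For all ρ ≥ 0 and u ∈ ℝ, the zeroth moment of the Maxwellian satisfies ∫_ℝ M(ρ,u,ξ) dξ = (ρ, ρu). -/
open MeasureTheory Real Set

noncomputable section

/-- J_λ = ∫_{-1}^1 (1-z²)^λ dz -/
def Jl (l : ℝ) : ℝ := ∫ z in (-1:ℝ)..1, (1 - z^2) ^ l

/-- θ = (γ-1)/2 -/
def th (γ : ℝ) : ℝ := (γ - 1) / 2

/-- λ = 1/(γ-1) - 1/2 -/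
def lam (γ : ℝ) : ℝ := 1 / (γ - 1) - 1 / 2

/-- a_γ = 2√(γκ)/(γ-1) -/
def ag (γ κ : ℝ) : ℝ := 2 * Real.sqrt (γ * κ) / (γ - 1)

/-- c_{γ,κ} = a_γ^{-2/(γ-1)} / J_λ -/
def cgk (γ κ : ℝ) : ℝ := ag γ κ ^ (-(2 / (γ - 1))) / Jl (lam γ)

/-- χ(ρ,ξ) = c_{γ,κ} (a_γ² ρ^{γ-1} - ξ²)_+^λ -/
def chi (γ κ ρ ξ : ℝ) : ℝ :=
  cgk γ κ * (max (ag γ κ ^ 2 * ρ ^ (γ - 1) - ξ ^ 2) 0) ^ lam γ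

/-- vector-valued Maxwellian -/
def Mx (γ κ ρ u ξ : ℝ) : ℝ × ℝ :=
  (chi γ κ ρ (ξ - u), ((1 - th γ) * u + th γ * ξ) * chi γ κ ρ (ξ - u))

/-- domain D = {f₀ > 0} ∪ {0} -/
def Dset : Set (ℝ × ℝ) := {f | 0 < f.1 ∨ f = 0}

/-- kinetic energy H(f,ξ) -/
def Hk (γ κ : ℝ) (f : ℝ × ℝ) (ξ : ℝ) : ℝ :=
  if f = 0 then 0 else
    th γ / (1 - th γ) * (ξ ^ 2 / 2) * f.1
      + th γ / (2 * cgk γ κ ^ (1 / lam γ)) * (f.1 ^ (1 + 1 / lam γ) / (1 + 1 / lam γ))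
      + 1 / (1 - th γ) * (1 / 2) * (f.2 ^ 2 / f.1)
      - th γ / (1 - th γ) * ξ * f.2

/-- u(f,ξ), inverse relation to f = M(ρ,u,ξ) -/
def uf (γ : ℝ) (f : ℝ × ℝ) (ξ : ℝ) : ℝ := (f.2 / f.1 - th γ * ξ) / (1 - th γ)

/-- ρ(f,ξ), inverse relation to f = M(ρ,u,ξ) -/
def rf (γ κ : ℝ) (f : ℝ × ℝ) (ξ : ℝ) : ℝ :=
  ag γ κ ^ (-(2 / (γ - 1))) *
    (((f.2 / f.1 - ξ) / (1 - th γ)) ^ 2 + (f.1 / cgk γ κ) ^ (1 / lam γ)) ^ (1 / (γ - 1))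

/-- kinetic Riemann invariant ω₁(f,ξ) -/
def om1 (γ κ : ℝ) (f : ℝ × ℝ) (ξ : ℝ) : ℝ :=
  uf γ f ξ - ag γ κ * rf γ κ f ξ ^ th γ

/-- kinetic Riemann invariant ω₂(f,ξ) -/
def om2 (γ κ : ℝ) (f : ℝ × ℝ) (ξ : ℝ) : ℝ :=
  uf γ f ξ + ag γ κ * rf γ κ f ξ ^ th γ

/-- Υ_{l}(z) = ∫_1^z (y²-1)^l dy -/
def Ups (l z : ℝ) : ℝ := ∫ y in (1:ℝ)..z, (y ^ 2 - 1) ^ l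

/-- entropy kernel Φ(ρ,u,ξ,v) -/
def Phi (γ κ ρ u ξ v : ℝ) : ℝ :=
  let w1 := u - ag γ κ * ρ ^ th γ
  let w2 := u + ag γ κ * ρ ^ th γ
  if w1 < ξ ∧ ξ < w2 ∧ w1 < v ∧ v < w2 then
    (1 - th γ) ^ 2 / th γ * (cgk γ κ / Jl (lam γ)) * |ξ - v| ^ (2 * lam γ - 1) *
      Ups (lam γ - 1) (((ξ + v) * (w1 + w2) - 2 * (w1 * w2 + ξ * v)) / ((w2 - w1) * |ξ - v|))
  else 0

/-- kinetic entropy H_S(f,ξ) -/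
def HS (γ κ : ℝ) (S : ℝ → ℝ) (f : ℝ × ℝ) (ξ : ℝ) : ℝ :=
  if f = 0 then 0 else ∫ v : ℝ, Phi γ κ (rf γ κ f ξ) (uf γ f ξ) ξ v * S v

/-- kinetic invariant domain D̃_ξ -/
def Dtil (γ κ ωmin ωmax ξ : ℝ) : Set (ℝ × ℝ) :=
  {f | f ∈ Dset ∧ (f = 0 ∨
    (ωmin ≤ om1 γ κ f ξ ∧ om1 γ κ f ξ ≤ om2 γ κ f ξ ∧ om2 γ κ f ξ ≤ ωmax))}

/-- T_S(ρ,u) (subdifferential of η_S) -/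
def TS (γ κ : ℝ) (S : ℝ → ℝ) (ρ u : ℝ) : ℝ × ℝ :=
  ((1 / Jl (lam γ)) * ∫ z in (-1:ℝ)..1, (1 - z ^ 2) ^ lam γ *
      (S (u + ag γ κ * ρ ^ th γ * z)
        + (th γ * ag γ κ * ρ ^ th γ * z - u) * deriv S (u + ag γ κ * ρ ^ th γ * z)),
   (1 / Jl (lam γ)) * ∫ z in (-1:ℝ)..1, (1 - z ^ 2) ^ lam γ *
      deriv S (u + ag γ κ * ρ ^ th γ * z))

/-- inner product on ℝ² -/
def dot (a b : ℝ × ℝ) : ℝ := a.1 * b.1 + a.2 * b.2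


section Aux

variable {γ κ : ℝ}

lemma hlam_pos (hγ : 1 < γ) (hγ' : γ < 3) : 0 < lam γ := by
  unfold lam
  have h1 : (0:ℝ) < γ - 1 := by linarith
  rw [sub_pos, one_div, one_div, inv_lt_inv₀ two_pos h1]
  linarith

lemma hag_pos (hκ : 0 < κ) (hγ : 1 < γ) : 0 < ag γ κ := by
  unfold ag
  have : 0 < Real.sqrt (γ * κ) := Real.sqrt_pos.mpr (by positivity)
  have h1 : (0:ℝ) < γ - 1 := by linarith
  positivity

lemma hJl_pos (hγ : 1 < γ) (hγ' : γ < 3) : 0 < Jl (lam γ) := by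
  have hl := hlam_pos hγ hγ'
  have hcont : Continuous fun z : ℝ => (1 - z ^ 2) ^ lam γ :=
    (continuous_const.sub (continuous_pow 2)).rpow_const fun x => Or.inr hl.le
  refine intervalIntegral.intervalIntegral_pos_of_pos_on
    (hcont.intervalIntegrable _ _) (fun x hx => ?_) (by norm_num)
  exact Real.rpow_pos_of_pos (by nlinarith [hx.1, hx.2]) _

lemma chi_cont (γ κ ρ : ℝ) (hl : 0 ≤ lam γ) : Continuous (chi γ κ ρ) := by
  unfold chi
  exact continuous_const.mul
    (((continuous_const.sub (continuous_pow 2)).max continuous_const).rpow_const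
      fun x => Or.inr hl)

lemma chi_zero_outside (hκ : 0 < κ) (hγ : 1 < γ) (hγ' : γ < 3) {ρ x : ℝ}
    (hx : x ∉ Set.Icc (-(ag γ κ * ρ ^ th γ)) (ag γ κ * ρ ^ th γ)) (hρ : 0 ≤ ρ) :
    chi γ κ ρ x = 0 := by
  have hl := hlam_pos hγ hγ'
  set b := ag γ κ * ρ ^ th γ with hbdef
  have hb2 : b ^ 2 = ag γ κ ^ 2 * ρ ^ (γ - 1) := by
    have h2 : (ρ ^ th γ) ^ 2 = ρ ^ (γ - 1) := by
      rw [← Real.rpow_natCast (ρ ^ th γ) 2, ← Real.rpow_mul hρ]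
      congr 1
      unfold th
      push_cast
      ring
    rw [hbdef, mul_pow, h2]
  have hbnn : 0 ≤ b := by
    have := hag_pos hκ hγ (κ := κ)
    have := Real.rpow_nonneg hρ (th γ)
    positivity
  have hxb : b ^ 2 ≤ x ^ 2 := by
    rw [Set.mem_Icc, not_and_or, not_le, not_le] at hx
    rcases hx with h | h <;> nlinarith [hbnn]
  unfold chi
  rw [← hb2, max_eq_right (by linarith), Real.zero_rpow hl.ne', mul_zero]

lemma chi_integral (hκ : 0 < κ) (hγ : 1 < γ) (hγ' : γ < 3) {ρ : ℝ} (hρ : 0 < ρ) :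
    ∫ ζ : ℝ, chi γ κ ρ ζ = ρ := by
  have hl := hlam_pos hγ hγ'
  have ha := hag_pos hκ hγ (κ := κ)
  have hJ := hJl_pos hγ hγ'
  have h1 : (0:ℝ) < γ - 1 := by linarith
  set b := ag γ κ * ρ ^ th γ with hbdef
  have hb : 0 < b := by
    have := Real.rpow_pos_of_pos hρ (th γ); positivity
  have hb2 : ag γ κ ^ 2 * ρ ^ (γ - 1) = b ^ 2 := by
    have h2 : (ρ ^ th γ) ^ 2 = ρ ^ (γ - 1) := by
      rw [← Real.rpow_natCast (ρ ^ th γ) 2, ← Real.rpow_mul hρ.le]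
      congr 1
      unfold th
      push_cast
      ring
    rw [hbdef, mul_pow, h2]
  have step1 : ∫ ζ : ℝ, chi γ κ ρ ζ
      = cgk γ κ * ∫ ζ : ℝ, (max (b ^ 2 - ζ ^ 2) 0) ^ lam γ := by
    unfold chi
    rw [MeasureTheory.integral_const_mul]
    congr 1
    simp_rw [hb2]
  have hvan : ∀ ζ : ℝ, ζ ∉ Set.Ioc (-b) b → (max (b ^ 2 - ζ ^ 2) 0 : ℝ) ^ lam γ = 0 := by
    intro ζ hζ
    rw [Set.mem_Ioc, not_and_or, not_lt, not_le] at hζ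
    have : b ^ 2 ≤ ζ ^ 2 := by rcases hζ with h | h <;> nlinarith
    rw [max_eq_right (by linarith), Real.zero_rpow hl.ne']
  have step2 : ∫ ζ : ℝ, (max (b ^ 2 - ζ ^ 2) 0 : ℝ) ^ lam γ
      = ∫ ζ in (-b)..b, (max (b ^ 2 - ζ ^ 2) 0 : ℝ) ^ lam γ := by
    rw [intervalIntegral.integral_of_le (by linarith),
      MeasureTheory.setIntegral_eq_integral_of_forall_compl_eq_zero hvan]
  have step3 : (b • ∫ z in (-1:ℝ)..1, (max (b ^ 2 - (b * z) ^ 2) 0 : ℝ) ^ lam γ)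
      = ∫ ζ in (-b)..b, (max (b ^ 2 - ζ ^ 2) 0 : ℝ) ^ lam γ := by
    have := intervalIntegral.smul_integral_comp_mul_left
      (a := (-1:ℝ)) (b := (1:ℝ))
      (f := fun ζ => (max (b ^ 2 - ζ ^ 2) 0 : ℝ) ^ lam γ) b
    rwa [mul_neg_one, mul_one] at this
  have step4 : ∀ z : ℝ, (max (b ^ 2 - (b * z) ^ 2) 0 : ℝ) ^ lam γ
      = (b ^ 2) ^ lam γ * (max (1 - z ^ 2) 0 : ℝ) ^ lam γ := by
    intro z
    have h1 : b ^ 2 - (b * z) ^ 2 = b ^ 2 * (1 - z ^ 2) := by ring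
    have h2 : (0:ℝ) = b ^ 2 * 0 := by ring
    rw [h1, h2, ← mul_max_of_nonneg _ _ (sq_nonneg b), mul_zero,
      Real.mul_rpow (sq_nonneg b) (le_max_right _ _)]
  have step5 : ∫ z in (-1:ℝ)..1, (max (1 - z ^ 2) 0 : ℝ) ^ lam γ = Jl (lam γ) := by
    unfold Jl
    refine intervalIntegral.integral_congr fun z hz => ?_
    rw [Set.uIcc_of_le (by norm_num : (-1:ℝ) ≤ 1), Set.mem_Icc] at hz
    rw [max_eq_left (by nlinarith [hz.1, hz.2])]
  rw [step1, step2, ← step3]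
  simp_rw [step4]
  rw [intervalIntegral.integral_const_mul, step5]
  have hbpow : b * (b ^ 2) ^ lam γ = b ^ (2 / (γ - 1)) := by
    rw [← Real.rpow_natCast b 2, ← Real.rpow_mul hb.le,
      show (2 / (γ - 1)) = 1 + ((2:ℕ):ℝ) * lam γ by
        push_cast; unfold lam; field_simp; ring,
      Real.rpow_add hb, Real.rpow_one]
  have hbs : b ^ (2 / (γ - 1)) = ag γ κ ^ (2 / (γ - 1)) * ρ := by
    rw [hbdef, Real.mul_rpow ha.le (Real.rpow_nonneg hρ.le _),
      ← Real.rpow_mul hρ.le,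
      show th γ * (2 / (γ - 1)) = 1 by unfold th; field_simp,
      Real.rpow_one]
  have hane : ag γ κ ^ (2 / (γ - 1)) ≠ 0 := (Real.rpow_pos_of_pos ha _).ne'
  unfold cgk
  rw [smul_eq_mul, show b * ((b ^ 2) ^ lam γ * Jl (lam γ)) = b * (b ^ 2) ^ lam γ * Jl (lam γ) by ring,
    hbpow, hbs, Real.rpow_neg ha.le]
  field_simp

lemma chi_odd_integral (γ κ ρ : ℝ) : ∫ ζ : ℝ, ζ * chi γ κ ρ ζ = 0 := by
  have heven : ∀ x : ℝ, chi γ κ ρ (-x) = chi γ κ ρ x := by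
    intro x; unfold chi; rw [neg_pow]; norm_num
  have h := MeasureTheory.integral_neg_eq_self (μ := volume)
    (fun ζ : ℝ => ζ * chi γ κ ρ ζ)
  simp only [heven] at h
  have h2 : ∫ x : ℝ, (-x) * chi γ κ ρ x = - ∫ x : ℝ, x * chi γ κ ρ x := by
    simp_rw [neg_mul]
    exact MeasureTheory.integral_neg _
  rw [h2] at h
  linarith

end Aux

theorem stmt1 (γ κ : ℝ) (hκ : 0 < κ) (hγ : 1 < γ) (hγ' : γ < 3)
    (ρ u : ℝ) (hρ : 0 ≤ ρ) :
    (∫ ξ : ℝ, (Mx γ κ ρ u ξ).1) = ρ ∧ (∫ ξ : ℝ, (Mx γ κ ρ u ξ).2) = ρ * u := by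
  rcases hρ.eq_or_lt with rfl | hρ'
  · have h1 : γ - 1 ≠ 0 := by intro h; linarith [hγ]
    have hl := hlam_pos hγ hγ'
    have hz : ∀ ξ : ℝ, chi γ κ 0 ξ = 0 := by
      intro ξ
      unfold chi
      rw [Real.zero_rpow h1, mul_zero, zero_sub,
        max_eq_right (neg_nonpos.mpr (sq_nonneg ξ)), Real.zero_rpow hl.ne', mul_zero]
    constructor <;> simp [Mx, hz]
  · have hl := hlam_pos hγ hγ'
    have hcχ : Continuous (chi γ κ ρ) := chi_cont γ κ ρ hl.le
    have hsupp : HasCompactSupport (chi γ κ ρ) :=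
      HasCompactSupport.intro (isCompact_Icc (a := -(ag γ κ * ρ ^ th γ))
        (b := ag γ κ * ρ ^ th γ)) fun x hx => chi_zero_outside hκ hγ hγ' hx hρ
    have hint1 : MeasureTheory.Integrable (chi γ κ ρ) :=
      hcχ.integrable_of_hasCompactSupport hsupp
    have hint2 : MeasureTheory.Integrable (fun ζ : ℝ => ζ * chi γ κ ρ ζ) := by
      refine (continuous_id.mul hcχ).integrable_of_hasCompactSupport ?_
      refine HasCompactSupport.intro (isCompact_Icc (a := -(ag γ κ * ρ ^ th γ))
        (b := ag γ κ * ρ ^ th γ)) fun x hx => ?_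
      simp [chi_zero_outside hκ hγ hγ' hx hρ]
    constructor
    · show (∫ ξ : ℝ, chi γ κ ρ (ξ - u)) = ρ
      rw [MeasureTheory.integral_sub_right_eq_self (chi γ κ ρ) u]
      exact chi_integral hκ hγ hγ' hρ'
    · show (∫ ξ : ℝ, ((1 - th γ) * u + th γ * ξ) * chi γ κ ρ (ξ - u)) = ρ * u
      have hrw : ∀ ξ : ℝ, ((1 - th γ) * u + th γ * ξ) * chi γ κ ρ (ξ - u)
          = (fun ζ : ℝ => u * chi γ κ ρ ζ + th γ * (ζ * chi γ κ ρ ζ)) (ξ - u) := by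
        intro ξ; simp only; ring
      simp_rw [hrw]
      rw [MeasureTheory.integral_sub_right_eq_self
        (fun ζ : ℝ => u * chi γ κ ρ ζ + th γ * (ζ * chi γ κ ρ ζ)) u,
        MeasureTheory.integral_add (hint1.const_mul u) (hint2.const_mul (th γ)),
        MeasureTheory.integral_const_mul, MeasureTheory.integral_const_mul,
        chi_integral hκ hγ hγ' hρ', chi_odd_integral]
      ring
end
end

section
/- The sets {f ∈ ℝ² : f₀ > 0} and {(ω₁,ω₂) ∈ ℝ² : ω₁ < ξ < ω₂} are in bijection via the maps Q and R: for every f with f₀ > 0, Q(f) satisfies Q(f)₁ < ξ < Q(f)₂ and R(Q(f)) = f; and for every ω with ω₁ < ξ < ω₂, R(ω)₀ > 0 and Q(R(ω)) = ω. -/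
open MeasureTheory Real Set

noncomputable section

/-- the map Q from f to the kinetic Riemann invariants -/
def Qm (γ κ ξ : ℝ) (f : ℝ × ℝ) : ℝ × ℝ :=
  ((f.2 / f.1 - th γ * ξ) / (1 - th γ)
      - Real.sqrt (((f.2 / f.1 - ξ) / (1 - th γ)) ^ 2 + (f.1 / cgk γ κ) ^ (1 / lam γ)),
   (f.2 / f.1 - th γ * ξ) / (1 - th γ)
      + Real.sqrt (((f.2 / f.1 - ξ) / (1 - th γ)) ^ 2 + (f.1 / cgk γ κ) ^ (1 / lam γ)))

/-- the map R from the kinetic Riemann invariants to f -/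
def Rm (γ κ ξ : ℝ) (ω : ℝ × ℝ) : ℝ × ℝ :=
  (cgk γ κ * (max (((ω.2 - ω.1) / 2) ^ 2 - (ξ - (ω.1 + ω.2) / 2) ^ 2) 0) ^ lam γ,
   ((1 - th γ) * (ω.1 + ω.2) / 2 + th γ * ξ) *
     (cgk γ κ * (max (((ω.2 - ω.1) / 2) ^ 2 - (ξ - (ω.1 + ω.2) / 2) ^ 2) 0) ^ lam γ))

/-!
Both maps factor through the coordinates `(u, D)`, with `u` the bulk velocity and
`D = a_γ² ρ^{γ-1} - (ξ - u)²` the bracket of the Maxwellian, so that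
`f = (c D^λ, ((1-θ)u + θξ) c D^λ)`; on `D > 0` this is inverted by `D = (f₀/c)^{1/λ}`,
`u = (f₁/f₀ - θξ)/(1-θ)`. The second factor is `(u, D) ↦ (u - s, u + s)` with
`s = √((u - ξ)² + D)`, inverted by the midpoint of `ω` and `D = (ξ - ω₁)(ω₂ - ξ)`;
and `D > 0` is exactly `|ξ - u| < s`, i.e. `ω₁ < ξ < ω₂`.
-/

open Real

lemma lam_pos {γ : ℝ} (hγ : 1 < γ) (hγ' : γ < 3) : 0 < lam γ := by
  rw [lam, sub_pos]
  exact one_div_lt_one_div_of_lt (by linarith) (by linarith)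

lemma th_ne_one {γ : ℝ} (hγ' : γ < 3) : th γ ≠ 1 := by
  rw [th]
  intro h
  linarith

lemma Jl_pos {l : ℝ} (hl : 0 ≤ l) : 0 < Jl l := by
  refine intervalIntegral.intervalIntegral_pos_of_pos_on ?_ (fun z hz => ?_) (by norm_num)
  · exact (Continuous.rpow_const (by fun_prop) fun _ => Or.inr hl).intervalIntegrable _ _
  · exact rpow_pos_of_pos (by nlinarith [hz.1, hz.2]) _

lemma ag_pos {γ κ : ℝ} (hκ : 0 < κ) (hγ : 1 < γ) : 0 < ag γ κ := by
  have : 0 < γ * κ := mul_pos (by linarith) hκ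
  exact div_pos (by positivity) (by linarith)

lemma cgk_pos {γ κ : ℝ} (hκ : 0 < κ) (hγ : 1 < γ) (hγ' : γ < 3) : 0 < cgk γ κ :=
  div_pos (rpow_pos_of_pos (ag_pos hκ hγ) _) (Jl_pos (lam_pos hγ hγ').le)

/-- The vector Maxwellian `Mx γ κ ρ u ξ` written through its bracket
`D = a_γ² ρ^{γ-1} - (ξ - u)²` in place of `ρ` (the two agree when `D > 0`). -/
def maxwellianOfBracket (γ κ ξ u D : ℝ) : ℝ × ℝ :=
  (cgk γ κ * D ^ lam γ, ((1 - th γ) * u + th γ * ξ) * (cgk γ κ * D ^ lam γ))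

/-- The kinetic Riemann invariants `u ∓ a_γ ρ^θ`, where `a_γ ρ^θ = √((u - ξ)² + D)`. -/
def kineticInvariants (ξ u D : ℝ) : ℝ × ℝ :=
  (u - √((u - ξ) ^ 2 + D), u + √((u - ξ) ^ 2 + D))

section MaxwellianOfBracket

variable {γ κ ξ : ℝ}

lemma maxwellianOfBracket_fst_pos {u D : ℝ} (hc : 0 < cgk γ κ) (hD : 0 < D) :
    0 < (maxwellianOfBracket γ κ ξ u D).1 :=
  mul_pos hc (rpow_pos_of_pos hD _)

lemma maxwellianOfBracket_uf {f : ℝ × ℝ} (hc : 0 < cgk γ κ) (hl : lam γ ≠ 0) (ht : th γ ≠ 1)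
    (hf : 0 < f.1) :
    maxwellianOfBracket γ κ ξ (uf γ f ξ) ((f.1 / cgk γ κ) ^ (1 / lam γ)) = f := by
  have hdens : cgk γ κ * ((f.1 / cgk γ κ) ^ (1 / lam γ)) ^ lam γ = f.1 := by
    rw [one_div, rpow_inv_rpow (div_pos hf hc).le hl, mul_div_cancel₀ _ hc.ne']
  have hmom : (1 - th γ) * uf γ f ξ + th γ * ξ = f.2 / f.1 := by
    rw [uf, mul_div_cancel₀ _ (sub_ne_zero.2 ht.symm)]
    ring
  rw [maxwellianOfBracket, hdens, hmom, div_mul_cancel₀ _ hf.ne']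

lemma uf_maxwellianOfBracket {u D : ℝ} (hc : 0 < cgk γ κ) (ht : th γ ≠ 1) (hD : 0 < D) :
    uf γ (maxwellianOfBracket γ κ ξ u D) ξ = u := by
  have hdens := (maxwellianOfBracket_fst_pos (ξ := ξ) (u := u) hc hD).ne'
  simp only [maxwellianOfBracket] at hdens ⊢
  rw [uf, mul_div_cancel_right₀ _ hdens, add_sub_cancel_right,
    mul_div_cancel_left₀ _ (sub_ne_zero.2 ht.symm)]

lemma maxwellianOfBracket_fst_div_rpow {u D : ℝ} (hc : 0 < cgk γ κ) (hl : lam γ ≠ 0)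
    (hD : 0 ≤ D) : ((maxwellianOfBracket γ κ ξ u D).1 / cgk γ κ) ^ (1 / lam γ) = D := by
  rw [maxwellianOfBracket, mul_div_cancel_left₀ _ hc.ne', one_div, rpow_rpow_inv hD hl]

end MaxwellianOfBracket

lemma abs_lt_sqrt_sq_add (x : ℝ) {D : ℝ} (hD : 0 < D) : |x| < √(x ^ 2 + D) := by
  rw [← sqrt_sq_eq_abs]
  exact sqrt_lt_sqrt (sq_nonneg x) (lt_add_of_pos_right _ hD)

section KineticInvariants

variable {ξ u D : ℝ}

lemma kineticInvariants_fst_lt (hD : 0 < D) : (kineticInvariants ξ u D).1 < ξ := by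
  have := (abs_lt.1 (abs_lt_sqrt_sq_add (u - ξ) hD)).2
  simp only [kineticInvariants]
  linarith

lemma lt_kineticInvariants_snd (hD : 0 < D) : ξ < (kineticInvariants ξ u D).2 := by
  have := (abs_lt.1 (abs_lt_sqrt_sq_add (u - ξ) hD)).1
  simp only [kineticInvariants]
  linarith

lemma kineticInvariants_midpoint :
    ((kineticInvariants ξ u D).1 + (kineticInvariants ξ u D).2) / 2 = u := by
  simp only [kineticInvariants]
  ring

lemma kineticInvariants_bracket (hD : 0 ≤ D) :
    (ξ - (kineticInvariants ξ u D).1) * ((kineticInvariants ξ u D).2 - ξ) = D := by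
  have hs := sq_sqrt (add_nonneg (sq_nonneg (u - ξ)) hD)
  simp only [kineticInvariants]
  linear_combination hs

lemma kineticInvariants_midpoint_bracket {ω : ℝ × ℝ} (h : ω.1 ≤ ω.2) :
    kineticInvariants ξ ((ω.1 + ω.2) / 2) ((ξ - ω.1) * (ω.2 - ξ)) = ω := by
  have hs : √(((ω.1 + ω.2) / 2 - ξ) ^ 2 + (ξ - ω.1) * (ω.2 - ξ)) = (ω.2 - ω.1) / 2 := by
    rw [show ((ω.1 + ω.2) / 2 - ξ) ^ 2 + (ξ - ω.1) * (ω.2 - ξ) = ((ω.2 - ω.1) / 2) ^ 2 by ring]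
    exact sqrt_sq (by linarith)
  rw [kineticInvariants, hs]
  ext <;> ring

end KineticInvariants

lemma Qm_eq_kineticInvariants {γ κ ξ : ℝ} (ht : th γ ≠ 1) (f : ℝ × ℝ) :
    Qm γ κ ξ f = kineticInvariants ξ (uf γ f ξ) ((f.1 / cgk γ κ) ^ (1 / lam γ)) := by
  have : (f.2 / f.1 - ξ) / (1 - th γ) = uf γ f ξ - ξ := by
    rw [uf, eq_sub_iff_add_eq, div_add' _ _ _ (sub_ne_zero.2 ht.symm)]
    ring_nf
  rw [Qm, kineticInvariants, this]
  rfl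

lemma Rm_eq_maxwellianOfBracket (γ κ ξ : ℝ) (ω : ℝ × ℝ) :
    Rm γ κ ξ ω = maxwellianOfBracket γ κ ξ ((ω.1 + ω.2) / 2) (max ((ξ - ω.1) * (ω.2 - ξ)) 0) := by
  rw [Rm, maxwellianOfBracket, mul_div_assoc]
  congr 5 <;> ring

theorem stmt3 (γ κ ξ : ℝ) (hκ : 0 < κ) (hγ : 1 < γ) (hγ' : γ < 3) :
    (∀ f : ℝ × ℝ, 0 < f.1 →
      (Qm γ κ ξ f).1 < ξ ∧ ξ < (Qm γ κ ξ f).2 ∧ Rm γ κ ξ (Qm γ κ ξ f) = f) ∧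
    (∀ ω : ℝ × ℝ, ω.1 < ξ → ξ < ω.2 →
      0 < (Rm γ κ ξ ω).1 ∧ Qm γ κ ξ (Rm γ κ ξ ω) = ω) := by
  have hc := cgk_pos hκ hγ hγ'
  have hl := (lam_pos hγ hγ').ne'
  have ht := th_ne_one hγ'
  constructor
  · intro f hf
    have hD : 0 < (f.1 / cgk γ κ) ^ (1 / lam γ) := rpow_pos_of_pos (div_pos hf hc) _
    rw [Qm_eq_kineticInvariants ht]
    refine ⟨kineticInvariants_fst_lt hD, lt_kineticInvariants_snd hD, ?_⟩
    rw [Rm_eq_maxwellianOfBracket, kineticInvariants_midpoint, kineticInvariants_bracket hD.le,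
      max_eq_left hD.le, maxwellianOfBracket_uf hc hl ht hf]
  · intro ω h1 h2
    have hD : 0 < (ξ - ω.1) * (ω.2 - ξ) := mul_pos (sub_pos.2 h1) (sub_pos.2 h2)
    rw [Rm_eq_maxwellianOfBracket, max_eq_left hD.le]
    refine ⟨maxwellianOfBracket_fst_pos hc hD, ?_⟩
    rw [Qm_eq_kineticInvariants ht, uf_maxwellianOfBracket hc ht hD,
      maxwellianOfBracket_fst_div_rpow hc hl hD.le,
      kineticInvariants_midpoint_bracket (h1.trans h2).le]
end
end
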